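/- arXiv:2507.10982 — 2 statements merged into one kernel-verified Lean document; each statement's English description precedes it below -/
import Mathlib

section
/- Suppose α = 1 and γ > 1 (β, δ ∈ ℝ arbitrary). Then the density d_i exists for every i ∈ ℕ ∪ {∞}, with d_i = 0 for every finite i ∈ ℕ and d_∞ = 1 − 1/γ; that is, d = (0, 0, 0̄, 1 − 1/γ). -/
open scoped BigOperators

noncomputable section

/-- The Beatty set `S(τ,η) = {⌊τk+η⌋ : k ∈ ℕ} ∩ ℕ`, viewed as a set of positive integers
(inside `ℤ`).  Here `ℕ` denotes the positive integers, so `k` ranges over `k ≥ 1`. -/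
def BeattySet (τ η : ℝ) : Set ℤ :=
  {x : ℤ | 0 < x ∧ ∃ k : ℕ, 0 < k ∧ ⌊τ * (k : ℝ) + η⌋ = x}

/-- The sets `A_i` (for `1 ≤ i < ∞`) associated to the data `(α,β,γ,δ)` and the map `f`
(which satisfies `f(⌊αk+β⌋) = ⌊γk+δ⌋` for `k ≥ 1`):
`A_1 = ℕ \ (S(α,β) ∪ S(γ,δ))`, and for `i ≥ 2`,
`A_i = {x ∈ S(α,β) \ S(γ,δ) : f^j(x) ∈ S(α,β) ∩ S(γ,δ) for 1 ≤ j ≤ i−2, and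
f^{i−1}(x) ∈ S(γ,δ) \ S(α,β)}`. -/
def ASet (α β γ δ : ℝ) (f : ℤ → ℤ) (i : ℕ) : Set ℤ :=
  if i = 1 then {x : ℤ | 0 < x} \ (BeattySet α β ∪ BeattySet γ δ)
  else (BeattySet α β \ BeattySet γ δ) ∩
    {x : ℤ | (∀ j : ℕ, 1 ≤ j → j ≤ i - 2 → f^[j] x ∈ BeattySet α β ∩ BeattySet γ δ) ∧
      f^[i - 1] x ∈ BeattySet γ δ \ BeattySet α β}

/-- The set `A_∞ = {x ∈ S(α,β) \ S(γ,δ) : f^j(x) ∈ S(α,β) ∩ S(γ,δ) for all j ≥ 1}`. -/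
def AInf (α β γ δ : ℝ) (f : ℤ → ℤ) : Set ℤ :=
  (BeattySet α β \ BeattySet γ δ) ∩
    {x : ℤ | ∀ j : ℕ, 1 ≤ j → f^[j] x ∈ BeattySet α β ∩ BeattySet γ δ}

/-- `A` has (Banach) density `d`: the limit of `|A ∩ [n₁,n₂]| / (n₂ − n₁)` as `n₂ − n₁ → ∞`
over intervals `[n₁,n₂]` of positive integers exists and equals `d`. -/
def HasBanachDensity (A : Set ℤ) (d : ℝ) : Prop :=
  ∀ ε : ℝ, 0 < ε → ∃ N : ℕ, ∀ n₁ n₂ : ℕ, 0 < n₁ → n₁ + N ≤ n₂ →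
    |((A ∩ Set.Icc (n₁ : ℤ) (n₂ : ℤ)).ncard : ℝ) / ((n₂ : ℝ) - (n₁ : ℝ)) - d| < ε

end

/-!
For `α = 1` the set `S(1,β)` contains every integer `x > ⌊β⌋`, and there
`f x = ⌊γ (x - ⌊β⌋) + δ⌋ ≥ x` once `x` is large, since `γ > 1`. So beyond a threshold `M` the
half-line `[M, ∞)` is `f`-invariant, lies in `S(1,β)` and is mapped into `S(γ,δ)`: every orbit
starting there stays in `S(1,β) ∩ S(γ,δ)`. Hence each `A_i` lies below `M`, while above `M` the set
`A_∞` is the complement of `S(γ,δ)`. Densities follow from counting with bounded error: for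
`γ ≥ 1` the Beatty set `S(γ,δ)` meets `[m, n]` in `(n - m)/γ + O(1)` points, and an `O(1)` error
survives complements and changes below a threshold.
-/

open Set Filter

theorem ncard_inter_Icc_le_add_of_forall_ge {A B : Set ℤ} (M : ℤ)
    (h : ∀ x, M ≤ x → (x ∈ A ↔ x ∈ B)) {m : ℤ} (hm : 0 ≤ m) (n : ℤ) :
    (B ∩ Icc m n).ncard ≤ (A ∩ Icc m n).ncard + M.toNat := by
  calc (B ∩ Icc m n).ncard ≤ ((B ∩ Icc m n) \ (A ∩ Icc m n)).ncard + (A ∩ Icc m n).ncard :=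
        ncard_le_ncard_sdiff_add_ncard _ _ ((finite_Icc m n).inter_of_right A)
    _ ≤ (Ico 0 M).ncard + (A ∩ Icc m n).ncard := by
        gcongr
        · exact finite_Ico 0 M
        · rintro x ⟨⟨hxB, hxI⟩, hxA⟩
          exact ⟨hm.trans hxI.1, lt_of_not_ge fun hMx => hxA ⟨(h x hMx).2 hxB, hxI⟩⟩
    _ = _ := by rw [add_comm, ← Finset.coe_Ico, ncard_coe_finset, Int.card_Ico, sub_zero]

def BoundedDiscrepancy (A : Set ℤ) (d : ℝ) : Prop :=
  ∃ C : ℝ, ∀ m n : ℕ, m ≤ n → |((A ∩ Icc (m : ℤ) n).ncard : ℝ) - d * ((n : ℝ) - m)| ≤ C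

namespace BoundedDiscrepancy

variable {A B : Set ℤ} {d : ℝ}

theorem empty : BoundedDiscrepancy ∅ 0 := ⟨0, by simp⟩

theorem hasBanachDensity (h : BoundedDiscrepancy A d) : HasBanachDensity A d := by
  obtain ⟨C, hC⟩ := h
  intro ε hε
  obtain ⟨N, hN⟩ := exists_nat_gt (C / ε)
  refine ⟨N + 1, fun n₁ n₂ _ hn => ?_⟩
  have hL : (N : ℝ) + 1 ≤ n₂ - n₁ := by
    rw [le_sub_iff_add_le']; exact_mod_cast hn
  have hL0 : 0 < (n₂ : ℝ) - n₁ := by linarith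
  rw [div_sub' hL0.ne', abs_div, abs_of_pos hL0, div_lt_iff₀ hL0]
  calc |_ - ((n₂ : ℝ) - n₁) * d| ≤ C := by rw [mul_comm]; exact hC n₁ n₂ (by omega)
    _ < ε * N := by rwa [div_lt_iff₀' hε] at hN
    _ ≤ ε * ((n₂ : ℝ) - n₁) := by gcongr; linarith

theorem congr (M : ℤ) (hA : BoundedDiscrepancy A d) (h : ∀ x, M ≤ x → (x ∈ A ↔ x ∈ B)) :
    BoundedDiscrepancy B d := by
  obtain ⟨C, hC⟩ := hA
  refine ⟨C + M.toNat, fun m n hmn => ?_⟩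
  have hBA : ((B ∩ Icc (m : ℤ) n).ncard : ℝ) ≤ (A ∩ Icc (m : ℤ) n).ncard + M.toNat := by
    exact_mod_cast ncard_inter_Icc_le_add_of_forall_ge M h (Nat.cast_nonneg m) n
  have hAB : ((A ∩ Icc (m : ℤ) n).ncard : ℝ) ≤ (B ∩ Icc (m : ℤ) n).ncard + M.toNat := by
    exact_mod_cast
      ncard_inter_Icc_le_add_of_forall_ge M (fun x hx => (h x hx).symm) (Nat.cast_nonneg m) n
  have := abs_le.1 (hC m n hmn)
  rw [abs_le]
  constructor <;> linarith

theorem compl (h : BoundedDiscrepancy A d) : BoundedDiscrepancy Aᶜ (1 - d) := by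
  obtain ⟨C, hC⟩ := h
  refine ⟨C + 1, fun m n hmn => ?_⟩
  have hsplit := ncard_inter_add_ncard_sdiff_eq_ncard (Icc (m : ℤ) n) A (finite_Icc _ _)
  rw [← Finset.coe_Icc, ncard_coe_finset, Int.card_Icc, Finset.coe_Icc, inter_comm] at hsplit
  have hlen : (((n + 1 - m : ℤ)).toNat : ℝ) = n + 1 - m := by
    rw [← Int.cast_natCast, Int.toNat_of_nonneg (by omega)]; push_cast; ring
  have hsplitR := congrArg (Nat.cast : ℕ → ℝ) hsplit
  rw [Nat.cast_add, hlen] at hsplitR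
  rw [← sdiff_eq_compl_inter, abs_le]
  have := abs_le.1 (hC m n hmn)
  constructor <;> linarith

end BoundedDiscrepancy

section Beatty

variable {γ : ℝ} (δ : ℝ)

theorem strictMono_floor_mul_add (hγ : 1 ≤ γ) : StrictMono fun k : ℤ => ⌊γ * k + δ⌋ := by
  intro k l hkl
  have hstep : γ * k + δ + 1 ≤ γ * l + δ := by
    have : (k : ℝ) + 1 ≤ l := by exact_mod_cast hkl
    nlinarith
  calc ⌊γ * k + δ⌋ < ⌊γ * k + δ⌋ + 1 := lt_add_one _
    _ = ⌊γ * k + δ + 1⌋ := (Int.floor_add_one _).symm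
    _ ≤ ⌊γ * l + δ⌋ := Int.floor_mono hstep

theorem floor_mul_add_mem_Icc_iff (hγ : 0 < γ) {k m n : ℤ} :
    ⌊γ * k + δ⌋ ∈ Icc m n ↔ k ∈ Ico ⌈(m - δ) / γ⌉ ⌈(n + 1 - δ) / γ⌉ := by
  simp only [mem_Icc, mem_Ico, Int.le_floor, ← Int.lt_add_one_iff (b := n), Int.floor_lt,
    Int.ceil_le, Int.lt_ceil, div_le_iff₀ hγ, lt_div_iff₀ hγ]
  push_cast
  constructor <;> rintro ⟨h1, h2⟩ <;> constructor <;> linarith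

theorem ncard_range_floor_mul_add_inter_Icc (hγ : 1 ≤ γ) (m n : ℤ) :
    (range (fun k : ℤ => ⌊γ * k + δ⌋) ∩ Icc m n).ncard =
      (⌈(n + 1 - δ) / γ⌉ - ⌈(m - δ) / γ⌉).toNat := by
  have hpre : (fun k : ℤ => ⌊γ * k + δ⌋) ⁻¹' Icc m n = Ico ⌈(m - δ) / γ⌉ ⌈(n + 1 - δ) / γ⌉ := by
    ext k; exact floor_mul_add_mem_Icc_iff δ (by linarith)
  rw [← image_preimage_eq_range_inter,
    ncard_image_of_injective _ (strictMono_floor_mul_add δ hγ).injective, hpre,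
    ← Finset.coe_Ico, ncard_coe_finset, Int.card_Ico]

theorem boundedDiscrepancy_range_floor_mul_add (hγ : 1 ≤ γ) :
    BoundedDiscrepancy (range fun k : ℤ => ⌊γ * k + δ⌋) (1 / γ) := by
  refine ⟨2, fun m n hmn => ?_⟩
  rw [ncard_range_floor_mul_add_inter_Icc δ hγ]
  set u : ℝ := ((m : ℤ) - δ) / γ
  set v : ℝ := ((n : ℤ) + 1 - δ) / γ
  have hvu : v - u = 1 / γ * ((n : ℝ) - m) + 1 / γ := by simp only [u, v]; push_cast; ring
  have hγ₀ : 0 < 1 / γ := by positivity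
  have hnm : 0 ≤ 1 / γ * ((n : ℝ) - m) :=
    mul_nonneg hγ₀.le (sub_nonneg.2 (by exact_mod_cast hmn))
  have hγ₁ : 1 / γ ≤ 1 := by rw [div_le_one₀ (by linarith)]; exact hγ
  have huv : ⌈u⌉ ≤ ⌈v⌉ := Int.ceil_mono (by linarith)
  rw [← Int.cast_natCast, Int.toNat_of_nonneg (sub_nonneg.2 huv), abs_le]
  have := Int.le_ceil u
  have := Int.le_ceil v
  have := Int.ceil_lt_add_one u
  have := Int.ceil_lt_add_one v
  push_cast
  constructor <;> linarith

theorem mem_beattySet_iff_mem_range (hγ : 0 < γ) {x : ℤ} (hx : max 0 δ < x) :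
    x ∈ BeattySet γ δ ↔ x ∈ range fun k : ℤ => ⌊γ * k + δ⌋ := by
  constructor
  · rintro ⟨-, k, -, rfl⟩
    exact ⟨k, by simp⟩
  · rintro ⟨k, rfl⟩
    have hk : 0 < k := by
      have := Int.floor_le (γ * k + δ)
      have : 0 < γ * k := by linarith [le_max_right 0 δ]
      exact_mod_cast pos_of_mul_pos_right this hγ.le
    lift k to ℕ using hk.le
    exact ⟨by exact_mod_cast (le_max_left 0 δ).trans_lt hx, k, by exact_mod_cast hk, by simp⟩

theorem boundedDiscrepancy_beattySet (hγ : 1 ≤ γ) : BoundedDiscrepancy (BeattySet γ δ) (1 / γ) :=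
  (boundedDiscrepancy_range_floor_mul_add δ hγ).congr (⌊max 0 δ⌋ + 1) fun x hx =>
    (mem_beattySet_iff_mem_range δ (by linarith) (Int.floor_lt.1 hx)).symm

end Beatty

section Orbit

theorem iterate_mem_of_mapsTo {X : Type*} {f : X → X} {s t : Set X} (h : MapsTo f s (s ∩ t))
    {x : X} (hx : x ∈ s) {j : ℕ} (hj : 1 ≤ j) : f^[j] x ∈ s ∩ t := by
  obtain ⟨j, rfl⟩ := Nat.exists_eq_add_of_le' hj
  rw [Function.iterate_succ_apply']
  exact h ((h.mono_right inter_subset_left).iterate j hx)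

variable {α β γ δ : ℝ} {f : ℤ → ℤ} {M x : ℤ}

theorem notMem_aSet_of_le (hS : Ici M ⊆ BeattySet α β) (hf : MapsTo f (Ici M) (Ici M))
    {i : ℕ} (hx : M ≤ x) : x ∉ ASet α β γ δ f i := by
  unfold ASet
  split_ifs
  · exact fun hA => hA.2 (Or.inl (hS hx))
  · exact fun hA => hA.2.2.2 (hS (hf.iterate (i - 1) hx))

theorem mem_aInf_iff_of_le (hS : Ici M ⊆ BeattySet α β)
    (hf : MapsTo f (Ici M) (Ici M ∩ BeattySet γ δ)) (hx : M ≤ x) :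
    x ∈ AInf α β γ δ f ↔ x ∉ BeattySet γ δ := by
  refine ⟨fun hA => hA.1.2, fun hxγ => ⟨⟨hS hx, hxγ⟩, fun j hj => ?_⟩⟩
  obtain ⟨hxM, hxγ⟩ := iterate_mem_of_mapsTo hf hx hj
  exact ⟨hS hxM, hxγ⟩

theorem floor_one_mul_natCast_add (k : ℕ) (β : ℝ) : ⌊1 * (k : ℝ) + β⌋ = k + ⌊β⌋ := by
  rw [one_mul, Int.floor_natCast_add]

theorem exists_Ici_subset_beattySet_one_and_mapsTo (hγ : 1 < γ)
    (hf : ∀ k : ℕ, 0 < k → f ⌊(1 : ℝ) * (k : ℝ) + β⌋ = ⌊γ * (k : ℝ) + δ⌋) :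
    ∃ M : ℤ, Ici M ⊆ BeattySet 1 β ∧ MapsTo f (Ici M) (Ici M ∩ BeattySet γ δ) := by
  have hpos : ∀ᶠ k : ℕ in atTop, 0 < k := eventually_gt_atTop 0
  have hβ : ∀ᶠ k : ℕ in atTop, -⌊β⌋ < k :=
    tendsto_natCast_atTop_atTop.eventually_gt_atTop _
  have hgrow : ∀ᶠ k : ℕ in atTop, (⌊β⌋ - δ) / (γ - 1) ≤ (k : ℝ) :=
    tendsto_natCast_atTop_atTop.eventually_ge_atTop _
  obtain ⟨K, hK⟩ := eventually_atTop.1 (hpos.and (hβ.and hgrow))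
  refine ⟨K + ⌊β⌋, fun x hx => ?_, fun x hx => ?_⟩ <;>
    obtain ⟨k, hKk, rfl⟩ : ∃ k : ℕ, K ≤ k ∧ x = k + ⌊β⌋ :=
      ⟨(x - ⌊β⌋).toNat, by grind, by grind⟩ <;>
    obtain ⟨hk, hkβ, hkγ⟩ := hK k hKk
  · exact ⟨by omega, k, hk, floor_one_mul_natCast_add k β⟩
  · rw [← floor_one_mul_natCast_add k β, hf k hk]
    have hle : k + ⌊β⌋ ≤ ⌊γ * k + δ⌋ := by
      rw [Int.le_floor]
      rw [div_le_iff₀ (by linarith)] at hkγ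
      push_cast
      linarith
    exact ⟨hx.trans hle, by omega, k, hk, rfl⟩

end Orbit

/-- Suppose `α = 1` and `γ > 1`.  Then the density `d_i` exists for
every `i ∈ ℕ ∪ {∞}`, with `d_i = 0` for every finite `i` and `d_∞ = 1 − 1/γ`. -/
theorem densities_of_alpha_eq_one (β γ δ : ℝ) (hγ : 1 < γ) (f : ℤ → ℤ)
    (hf : ∀ k : ℕ, 0 < k → f ⌊(1 : ℝ) * (k : ℝ) + β⌋ = ⌊γ * (k : ℝ) + δ⌋) :
    (∀ i : ℕ, 1 ≤ i → HasBanachDensity (ASet 1 β γ δ f i) 0) ∧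
      HasBanachDensity (AInf 1 β γ δ f) (1 - 1 / γ) := by
  obtain ⟨M, hS, hf⟩ := exists_Ici_subset_beattySet_one_and_mapsTo hγ hf
  refine ⟨fun i _ => ?_, ?_⟩
  · refine (BoundedDiscrepancy.empty.congr M fun x hx => ?_).hasBanachDensity
    exact iff_of_false (notMem_empty x) (notMem_aSet_of_le hS (hf.mono_right inter_subset_left) hx)
  · refine ((boundedDiscrepancy_beattySet δ hγ.le).compl.congr M fun x hx => ?_).hasBanachDensity
    exact (mem_aInf_iff_of_le hS hf hx).symm
end

section
/- Suppose 1 ≤ α < γ, β, δ ∈ ℝ, and the set S(α,β) ∩ S(γ,δ) contains at most one element. Then the densities d_i exist for all i ∈ ℕ ∪ {∞}, with d_1 = 1 − 1/α − 1/γ, d_2 = 1/α, d_i = 0 for every i ≥ 3, and d_∞ = 0; that is, d = (1 − 1/α − 1/γ, 1/α, 0̄, 0). -/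
open scoped BigOperators

/-! ### Auxiliary lemmas -/

lemma g_strictMono {τ η : ℝ} (hτ : 1 ≤ τ) : StrictMono fun k : ℤ => ⌊τ * (k:ℝ) + η⌋ := by
  intro a b hab
  have hab' : (a:ℝ) + 1 ≤ b := by exact_mod_cast hab
  have h1 : τ * (a:ℝ) + η + 1 ≤ τ * (b:ℝ) + η := by nlinarith
  have h2 : ⌊τ * (a:ℝ) + η⌋ + 1 ≤ ⌊τ * (b:ℝ) + η⌋ := by
    calc ⌊τ * (a:ℝ) + η⌋ + 1 = ⌊τ * (a:ℝ) + η + 1⌋ := by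
          rw [Int.floor_add_one]
      _ ≤ ⌊τ * (b:ℝ) + η⌋ := Int.floor_le_floor h1
  show ⌊τ * (a:ℝ) + η⌋ < ⌊τ * (b:ℝ) + η⌋
  omega

lemma mem_beatty {τ η : ℝ} {x : ℤ} :
    x ∈ BeattySet τ η ↔ 0 < x ∧ ∃ k : ℤ, 1 ≤ k ∧ ⌊τ * (k:ℝ) + η⌋ = x := by
  constructor
  · rintro ⟨hx, k, hk, he⟩
    exact ⟨hx, (k:ℤ), by exact_mod_cast hk, by push_cast; exact he⟩
  · rintro ⟨hx, k, hk, he⟩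
    refine ⟨hx, k.toNat, by omega, ?_⟩
    rw [show ((k.toNat : ℕ) : ℝ) = (k:ℝ) by
      exact_mod_cast congrArg Int.cast (Int.toNat_of_nonneg (by omega))]
    exact he

lemma beatty_inter_Icc {τ η : ℝ} (hτ : 1 ≤ τ) (n₁ n₂ : ℤ) (h1 : 0 < n₁) :
    BeattySet τ η ∩ Set.Icc n₁ n₂ =
      (fun k : ℤ => ⌊τ * (k:ℝ) + η⌋) ''
        Set.Icc (max 1 ⌈((n₁:ℝ) - η)/τ⌉) (⌈((n₂:ℝ) + 1 - η)/τ⌉ - 1) := by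
  have hτ0 : (0:ℝ) < τ := lt_of_lt_of_le one_pos hτ
  ext x
  simp only [Set.mem_inter_iff, Set.mem_Icc, Set.mem_image, mem_beatty]
  constructor
  · rintro ⟨⟨hx, k, hk, he⟩, hx1, hx2⟩
    refine ⟨k, ⟨max_le hk ?_, ?_⟩, he⟩
    · rw [Int.ceil_le, div_le_iff₀ hτ0]
      have h0 : n₁ ≤ ⌊τ * (k:ℝ) + η⌋ := by rw [he]; exact hx1
      have hfk : (n₁:ℝ) ≤ τ * k + η := le_trans (by exact_mod_cast h0) (Int.floor_le _)
      linarith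
    · have h3 : τ * (k:ℝ) + η < (n₂:ℝ) + 1 := by
        have h5 := Int.lt_floor_add_one (τ * (k:ℝ) + η)
        have h4 : (⌊τ * (k:ℝ) + η⌋:ℝ) ≤ (n₂:ℝ) := by exact_mod_cast he ▸ hx2
        linarith
      have h6 : (k:ℝ) < ((n₂:ℝ) + 1 - η)/τ := by rw [lt_div_iff₀ hτ0]; linarith
      have h7 := Int.lt_ceil.mpr h6
      omega
  · rintro ⟨k, ⟨hk1, hk2⟩, he⟩
    have hk1' : 1 ≤ k := le_trans (le_max_left _ _) hk1
    have ha : ((n₁:ℝ) - η)/τ ≤ (k:ℝ) := by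
      exact_mod_cast le_trans (Int.le_ceil _)
        (by exact_mod_cast le_trans (le_max_right _ _) hk1)
    have hfl : n₁ ≤ ⌊τ * (k:ℝ) + η⌋ := by
      rw [Int.le_floor]
      rw [div_le_iff₀ hτ0] at ha
      linarith
    have hfu : ⌊τ * (k:ℝ) + η⌋ ≤ n₂ := by
      have h6 : (k:ℝ) < ((n₂:ℝ) + 1 - η)/τ := Int.lt_ceil.mp (by omega)
      rw [lt_div_iff₀ hτ0] at h6
      have h7 : ⌊τ * (k:ℝ) + η⌋ < n₂ + 1 := by
        rw [Int.floor_lt]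
        push_cast
        linarith
      omega
    exact ⟨⟨by omega, k, hk1', he⟩, by omega, by omega⟩

lemma beatty_count {τ η : ℝ} (hτ : 1 ≤ τ) (n₁ n₂ : ℤ) (h1 : 0 < n₁) (h12 : n₁ ≤ n₂) :
    |((BeattySet τ η ∩ Set.Icc n₁ n₂).ncard : ℝ) - ((n₂:ℝ) - n₁)/τ| ≤ 3 + |η| := by
  have hτ0 : (0:ℝ) < τ := lt_of_lt_of_le one_pos hτ
  have hcard : (BeattySet τ η ∩ Set.Icc n₁ n₂).ncard
      = (⌈((n₂:ℝ) + 1 - η)/τ⌉ - max 1 ⌈((n₁:ℝ) - η)/τ⌉).toNat := by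
    rw [beatty_inter_Icc hτ n₁ n₂ h1,
      Set.ncard_image_of_injective _ (g_strictMono hτ).injective,
      ← Finset.coe_Icc, Set.ncard_coe_finset, Int.card_Icc]
    congr 1
    ring
  rw [hcard]
  set a : ℝ := ((n₁:ℝ) - η)/τ with ha_def
  set b : ℝ := ((n₂:ℝ) + 1 - η)/τ with hb_def
  set D : ℝ := ((n₂:ℝ) - n₁)/τ with hD_def
  set p : ℤ := ⌈a⌉ with hp
  set q : ℤ := ⌈b⌉ with hq
  set m : ℤ := max 1 p with hm
  have hba : b - a = D + 1/τ := by
    rw [ha_def, hb_def, hD_def]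
    field_simp
    ring
  have h1τ : 1/τ ≤ 1 := by rw [div_le_one hτ0]; exact hτ
  have h1τ0 : 0 < 1/τ := by positivity
  have hD0 : 0 ≤ D := by
    apply div_nonneg _ hτ0.le
    have : (n₁:ℝ) ≤ n₂ := by exact_mod_cast h12
    linarith
  have hap : a ≤ (p:ℝ) := Int.le_ceil a
  have hap2 : (p:ℝ) < a + 1 := Int.ceil_lt_add_one a
  have hbq : b ≤ (q:ℝ) := Int.le_ceil b
  have hbq2 : (q:ℝ) < b + 1 := Int.ceil_lt_add_one b
  have hn1 : (1:ℝ) ≤ n₁ := by exact_mod_cast h1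
  have hDb : D - b ≤ |η| := by
    have he : D - b = (η - 1 - n₁)/τ := by rw [hD_def, hb_def]; ring
    rw [he]
    rcases le_total (η - 1 - (n₁:ℝ)) 0 with h | h
    · exact le_trans (div_nonpos_of_nonpos_of_nonneg h hτ0.le) (abs_nonneg _)
    · calc (η - 1 - (n₁:ℝ))/τ ≤ (η - 1 - n₁) := div_le_self h hτ
        _ ≤ |η| := by have := le_abs_self η; linarith
  rw [abs_sub_le_iff]
  rcases le_or_gt q m with hqm | hqm
  · have hz : (q - m).toNat = 0 := by omega
    rw [hz]
    have hDsmall : D ≤ 1 + |η| := by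
      rcases max_choice 1 p with h | h
      · have hq1 : q ≤ 1 := by omega
        have hb1 : b ≤ 1 := by
          have : (q:ℝ) ≤ 1 := by exact_mod_cast hq1
          linarith
        linarith
      · have hqp : q ≤ p := by omega
        have : (q:ℝ) ≤ p := by exact_mod_cast hqp
        have : b < a + 1 := by linarith
        have := abs_nonneg η
        linarith
    constructor
    · simp only [Nat.cast_zero]
      have := abs_nonneg η
      linarith
    · simp only [Nat.cast_zero]
      linarith
  · have htn : ((q - m).toNat : ℝ) = (q:ℝ) - m := by
      have : ((q-m).toNat : ℤ) = q - m := Int.toNat_of_nonneg (by omega)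
      exact_mod_cast this
    rw [htn]
    have hm1 : (1:ℝ) ≤ (m:ℝ) := by exact_mod_cast le_max_left 1 p
    have hmp : (p:ℝ) ≤ (m:ℝ) := by exact_mod_cast le_max_right 1 p
    constructor
    · have := abs_nonneg η
      linarith
    · rcases max_choice 1 p with h | h
      · have hm' : (m:ℝ) = 1 := by exact_mod_cast congrArg Int.cast h
        linarith
      · have hm' : (m:ℝ) = p := by exact_mod_cast congrArg Int.cast h
        have := abs_nonneg η
        linarith

lemma density_of_bounded (A : Set ℤ) (d C : ℝ) (hC : 0 ≤ C)
    (h : ∀ n₁ n₂ : ℕ, 0 < n₁ → n₁ ≤ n₂ →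
      |((A ∩ Set.Icc (n₁:ℤ) (n₂:ℤ)).ncard : ℝ) - d * ((n₂:ℝ) - n₁)| ≤ C) :
    HasBanachDensity A d := by
  intro ε hε
  obtain ⟨N, hN⟩ := exists_nat_gt (C / ε)
  refine ⟨N + 1, fun n₁ n₂ h1 h12 => ?_⟩
  have hL : (N:ℝ) + 1 ≤ (n₂:ℝ) - n₁ := by
    have : (n₁:ℝ) + (N + 1) ≤ n₂ := by exact_mod_cast h12
    linarith
  have hL0 : (0:ℝ) < (n₂:ℝ) - n₁ := by
    have : (0:ℝ) ≤ N := Nat.cast_nonneg N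
    linarith
  have hb := h n₁ n₂ h1 (by omega)
  have key : ((A ∩ Set.Icc (n₁:ℤ) (n₂:ℤ)).ncard : ℝ) / ((n₂:ℝ) - n₁) - d
      = (((A ∩ Set.Icc (n₁:ℤ) (n₂:ℤ)).ncard : ℝ) - d * ((n₂:ℝ) - n₁)) / ((n₂:ℝ) - n₁) := by
    field_simp
  rw [key, abs_div, abs_of_pos hL0]
  have h2 : |((A ∩ Set.Icc (n₁:ℤ) (n₂:ℤ)).ncard : ℝ) - d * ((n₂:ℝ) - n₁)| / ((n₂:ℝ) - n₁)
      ≤ C / ((n₂:ℝ) - n₁) := by gcongr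
  refine lt_of_le_of_lt h2 ?_
  rw [div_lt_iff₀ hL0]
  have hCN : C < N * ε := (div_lt_iff₀ hε).mp hN
  nlinarith [mul_le_mul_of_nonneg_left hL hε.le, Nat.cast_nonneg (α := ℝ) N]

lemma density_zero_of_subsingleton (A : Set ℤ) (h : A.Subsingleton) :
    HasBanachDensity A 0 := by
  apply density_of_bounded A 0 1 one_pos.le
  intro n₁ n₂ _ _
  have hfin : A.Finite := h.finite
  have hle : (A ∩ Set.Icc (n₁:ℤ) (n₂:ℤ)).ncard ≤ 1 := by
    have h1 : (A ∩ Set.Icc (n₁:ℤ) (n₂:ℤ)).Subsingleton := h.anti Set.inter_subset_left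
    rcases h1.eq_empty_or_singleton with h2 | ⟨x, h2⟩ <;> rw [h2] <;> simp
  simp only [zero_mul, sub_zero]
  rw [abs_of_nonneg (by positivity)]
  exact_mod_cast hle

/-- Suppose `1 ≤ α < γ` and `S(α,β) ∩ S(γ,δ)` contains at most one
element.  Then the densities exist, with `d_1 = 1 − 1/α − 1/γ`, `d_2 = 1/α`, `d_i = 0`
for every `i ≥ 3`, and `d_∞ = 0`. -/
theorem densities_almost_disjoint (α β γ δ : ℝ) (hα : 1 ≤ α) (hαγ : α < γ)
    (hcap : (BeattySet α β ∩ BeattySet γ δ).Subsingleton)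
    (f : ℤ → ℤ) (hf : ∀ k : ℕ, 0 < k → f ⌊α * (k : ℝ) + β⌋ = ⌊γ * (k : ℝ) + δ⌋) :
    HasBanachDensity (ASet α β γ δ f 1) (1 - 1 / α - 1 / γ) ∧
      HasBanachDensity (ASet α β γ δ f 2) (1 / α) ∧
      (∀ i : ℕ, 3 ≤ i → HasBanachDensity (ASet α β γ δ f i) 0) ∧
      HasBanachDensity (AInf α β γ δ f) 0 := by
  have hγ : 1 ≤ γ := le_trans hα hαγ.le
  have hα0 : (0:ℝ) < α := lt_of_lt_of_le one_pos hα
  have hγ0 : (0:ℝ) < γ := lt_of_lt_of_le one_pos hγ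
  set Sα := BeattySet α β with hSα
  set Sγ := BeattySet γ δ with hSγ
  set gα : ℤ → ℤ := fun k => ⌊α * (k:ℝ) + β⌋ with hgα
  set gγ : ℤ → ℤ := fun k => ⌊γ * (k:ℝ) + δ⌋ with hgγ
  have hfZ : ∀ k : ℤ, 1 ≤ k → f (gα k) = gγ k := by
    intro k hk
    have h0 := hf k.toNat (by omega)
    have hc : ((k.toNat : ℕ) : ℝ) = (k:ℝ) := by
      exact_mod_cast congrArg Int.cast (Int.toNat_of_nonneg (by omega))
    rw [hc] at h0
    exact h0
  -- the set of `x` with `x ∈ Sα` and `f x ∈ Sα ∩ Sγ` is a subsingleton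
  have key3 : {x : ℤ | x ∈ Sα ∧ f x ∈ Sα ∩ Sγ}.Subsingleton := by
    rintro x ⟨hx, hfx⟩ y ⟨hy, hfy⟩
    obtain ⟨-, k, hk1, hk2⟩ := mem_beatty.mp hx
    obtain ⟨-, l, hl1, hl2⟩ := mem_beatty.mp hy
    have h1 : f x = gγ k := by rw [← hk2]; exact hfZ k hk1
    have h2 : f y = gγ l := by rw [← hl2]; exact hfZ l hl1
    have h3 : gγ k = gγ l := by
      have hfx' : gγ k ∈ Sα ∩ Sγ := by rw [← h1]; exact hfx
      have hfy' : gγ l ∈ Sα ∩ Sγ := by rw [← h2]; exact hfy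
      exact hcap hfx' hfy'
    have h4 : k = l := (g_strictMono hγ).injective h3
    rw [← hk2, ← hl2, h4]
  refine ⟨?_, ?_, ?_, ?_⟩
  · -- density of A₁
    apply density_of_bounded _ _ ((3 + |β|) + (3 + |δ|) + 2) (by positivity)
    intro n₁ n₂ h1 h12
    set W : Set ℤ := Set.Icc (n₁:ℤ) (n₂:ℤ) with hW
    have hWfin : W.Finite := Set.finite_Icc _ _
    have hA1 : ASet α β γ δ f 1 ∩ W = W \ ((Sα ∪ Sγ) ∩ W) := by
      ext x
      constructor
      · rintro ⟨hx, hxW⟩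
        rw [ASet, if_pos rfl] at hx
        exact ⟨hxW, fun hc => hx.2 hc.1⟩
      · rintro ⟨hxW, hxn⟩
        refine ⟨?_, hxW⟩
        rw [ASet, if_pos rfl]
        refine ⟨?_, fun hc => hxn ⟨hc, hxW⟩⟩
        have hx1 : (n₁:ℤ) ≤ x := (Set.mem_Icc.mp hxW).1
        have hn1 : (1:ℤ) ≤ (n₁:ℤ) := by exact_mod_cast h1
        show (0:ℤ) < x
        omega
    have hUcard := Set.ncard_diff_add_ncard_of_subset
      (Set.inter_subset_right : (Sα ∪ Sγ) ∩ W ⊆ W) hWfin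
    have hdist : (Sα ∪ Sγ) ∩ W = (Sα ∩ W) ∪ (Sγ ∩ W) := Set.union_inter_distrib_right _ _ _
    have hSαWfin : (Sα ∩ W).Finite := hWfin.subset Set.inter_subset_right
    have hSγWfin : (Sγ ∩ W).Finite := hWfin.subset Set.inter_subset_right
    have hunion := Set.ncard_union_add_ncard_inter (Sα ∩ W) (Sγ ∩ W) hSαWfin hSγWfin
    have hint_le : ((Sα ∩ W) ∩ (Sγ ∩ W)).ncard ≤ 1 := by
      have hss : ((Sα ∩ W) ∩ (Sγ ∩ W)).Subsingleton := by
        apply hcap.anti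
        intro x hx
        exact ⟨hx.1.1, hx.2.1⟩
      rcases hss.eq_empty_or_singleton with h2 | ⟨x, h2⟩ <;> rw [h2] <;> simp
    have hWcard : (W.ncard : ℝ) = (n₂:ℝ) - n₁ + 1 := by
      rw [hW, ← Finset.coe_Icc, Set.ncard_coe_finset, Int.card_Icc]
      have h3 : ((n₂:ℤ) + 1 - n₁).toNat = n₂ + 1 - n₁ := by omega
      rw [h3]
      have : n₁ ≤ n₂ + 1 := by omega
      push_cast [Nat.cast_sub this]
      ring
    have hcα : |((Sα ∩ W).ncard : ℝ) - ((n₂:ℝ) - (n₁:ℝ))/α| ≤ 3 + |β| := by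
      have h2 := beatty_count (τ := α) (η := β) hα (n₁:ℤ) (n₂:ℤ)
        (by exact_mod_cast h1) (by exact_mod_cast h12)
      push_cast at h2
      exact h2
    have hcγ : |((Sγ ∩ W).ncard : ℝ) - ((n₂:ℝ) - (n₁:ℝ))/γ| ≤ 3 + |δ| := by
      have h2 := beatty_count (τ := γ) (η := δ) hγ (n₁:ℤ) (n₂:ℤ)
        (by exact_mod_cast h1) (by exact_mod_cast h12)
      push_cast at h2
      exact h2
    rw [abs_sub_le_iff] at hcα hcγ
    -- assemble
    rw [hA1]
    have c1 : ((W \ ((Sα ∪ Sγ) ∩ W)).ncard : ℝ) + (((Sα ∪ Sγ) ∩ W).ncard : ℝ)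
        = (W.ncard : ℝ) := by exact_mod_cast hUcard
    have c2 : (((Sα ∪ Sγ) ∩ W).ncard : ℝ) = (((Sα ∩ W) ∪ (Sγ ∩ W)).ncard : ℝ) := by
      rw [hdist]
    have c3 : (((Sα ∩ W) ∪ (Sγ ∩ W)).ncard : ℝ) + (((Sα ∩ W) ∩ (Sγ ∩ W)).ncard : ℝ)
        = ((Sα ∩ W).ncard : ℝ) + ((Sγ ∩ W).ncard : ℝ) := by exact_mod_cast hunion
    have hint_le' : (((Sα ∩ W) ∩ (Sγ ∩ W)).ncard : ℝ) ≤ 1 := by exact_mod_cast hint_le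
    have hint_nn : (0:ℝ) ≤ (((Sα ∩ W) ∩ (Sγ ∩ W)).ncard : ℝ) := by positivity
    have hd1 : (1 - 1/α - 1/γ) * ((n₂:ℝ) - n₁)
        = ((n₂:ℝ) - n₁) - ((n₂:ℝ) - n₁)/α - ((n₂:ℝ) - n₁)/γ := by ring
    rw [abs_sub_le_iff]
    constructor <;>
      linarith [hcα.1, hcα.2, hcγ.1, hcγ.2, c1, c2, c3, hint_le', hint_nn, hWcard, hd1]
  · -- density of A₂
    set K₀ : ℤ := max 1 ⌈(1 - δ)/γ⌉ with hK₀
    apply density_of_bounded _ _ ((3 + |β|) + (2 + (K₀.toNat : ℝ))) (by positivity)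
    intro n₁ n₂ h1 h12
    set W : Set ℤ := Set.Icc (n₁:ℤ) (n₂:ℤ) with hW
    have hWfin : W.Finite := Set.finite_Icc _ _
    set E : Set ℤ := (Sα ∩ Sγ) ∪ (gα '' {k : ℤ | gγ k ∈ Sα ∩ Sγ}) ∪ (gα '' (Set.Icc 1 K₀))
      with hE
    have hEfin : E.Finite := by
      apply Set.Finite.union
      apply Set.Finite.union
      · exact hcap.finite
      · apply Set.Subsingleton.finite
        apply Set.Subsingleton.image
        intro k hk l hl
        exact (g_strictMono hγ).injective (hcap hk hl)
      · exact (Set.finite_Icc _ _).image _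
    have hEcard : (E.ncard : ℝ) ≤ 2 + (K₀.toNat : ℝ) := by
      have h2 : E.ncard ≤ ((Sα ∩ Sγ) ∪ (gα '' {k : ℤ | gγ k ∈ Sα ∩ Sγ})).ncard
          + (gα '' (Set.Icc 1 K₀)).ncard :=
        Set.ncard_union_le ((Sα ∩ Sγ) ∪ (gα '' {k : ℤ | gγ k ∈ Sα ∩ Sγ}))
          (gα '' (Set.Icc 1 K₀))
      have h3 := Set.ncard_union_le (Sα ∩ Sγ) (gα '' {k : ℤ | gγ k ∈ Sα ∩ Sγ})
      have h4 : (Sα ∩ Sγ).ncard ≤ 1 := by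
        rcases hcap.eq_empty_or_singleton with h5 | ⟨x, h5⟩ <;> rw [h5] <;> simp
      have h6 : (gα '' {k : ℤ | gγ k ∈ Sα ∩ Sγ}).ncard ≤ 1 := by
        have hss : (gα '' {k : ℤ | gγ k ∈ Sα ∩ Sγ}).Subsingleton := by
          apply Set.Subsingleton.image
          intro k hk l hl
          exact (g_strictMono hγ).injective (hcap hk hl)
        rcases hss.eq_empty_or_singleton with h5 | ⟨x, h5⟩ <;> rw [h5] <;> simp
      have h7 : (gα '' (Set.Icc 1 K₀)).ncard ≤ K₀.toNat := by
        refine le_trans (Set.ncard_image_le (Set.finite_Icc _ _)) ?_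
        rw [← Finset.coe_Icc, Set.ncard_coe_finset, Int.card_Icc]
        omega
      have : E.ncard ≤ 2 + K₀.toNat := by omega
      exact_mod_cast this
    have hsub1 : ASet α β γ δ f 2 ⊆ Sα := by
      intro x hx
      rw [ASet, if_neg (by norm_num)] at hx
      exact hx.1.1
    have hsub2 : Sα \ E ⊆ ASet α β γ δ f 2 := by
      rintro x ⟨hxα, hxE⟩
      obtain ⟨hx0, k, hk1, hk2⟩ := mem_beatty.mp hxα
      have hxnotγ : x ∉ Sγ := fun h => hxE (Or.inl (Or.inl ⟨hxα, h⟩))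
      have hkK : K₀ < k := by
        by_contra h
        exact hxE (Or.inr ⟨k, ⟨hk1, by omega⟩, hk2⟩)
      have hgpos : 0 < gγ k := by
        have hc : ((1 - δ)/γ : ℝ) ≤ (K₀ : ℝ) := by
          refine le_trans (Int.le_ceil _) ?_
          exact_mod_cast le_max_right 1 ⌈(1 - δ)/γ⌉
        have hkr : (K₀:ℝ) + 1 ≤ (k:ℝ) := by exact_mod_cast hkK
        have hr : (1:ℝ) ≤ γ * (k:ℝ) + δ := by
          rw [div_le_iff₀ hγ0] at hc
          nlinarith
        have hfl : (1:ℤ) ≤ ⌊γ * (k:ℝ) + δ⌋ := by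
          rw [Int.le_floor]; exact_mod_cast hr
        show (0:ℤ) < ⌊γ * (k:ℝ) + δ⌋
        omega
      have hfx : f x = gγ k := by rw [← hk2]; exact hfZ k hk1
      have hfγ : f x ∈ Sγ := by
        rw [hfx]
        exact mem_beatty.mpr ⟨hgpos, k, hk1, rfl⟩
      have hfnotα : f x ∉ Sα := by
        intro h
        apply hxE
        left; right
        refine ⟨k, ?_, hk2⟩
        show gγ k ∈ Sα ∩ Sγ
        rw [← hfx]
        exact ⟨h, hfγ⟩
      rw [ASet, if_neg (by norm_num)]
      refine ⟨⟨hxα, hxnotγ⟩, ?_, ?_⟩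
      · intro j hj1 hj2
        omega
      · show f^[2-1] x ∈ Sγ \ Sα
        have : (2:ℕ) - 1 = 1 := rfl
        rw [this, Function.iterate_one]
        exact ⟨hfγ, hfnotα⟩
    have hcα : |((Sα ∩ W).ncard : ℝ) - ((n₂:ℝ) - (n₁:ℝ))/α| ≤ 3 + |β| := by
      have h2 := beatty_count (τ := α) (η := β) hα (n₁:ℤ) (n₂:ℤ)
        (by exact_mod_cast h1) (by exact_mod_cast h12)
      push_cast at h2
      exact h2
    set A2 := ASet α β γ δ f 2
    have hSαWfin : (Sα ∩ W).Finite := hWfin.subset Set.inter_subset_right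
    have hA2Wfin : (A2 ∩ W).Finite := hWfin.subset Set.inter_subset_right
    have hup : (A2 ∩ W).ncard ≤ (Sα ∩ W).ncard :=
      Set.ncard_le_ncard (Set.inter_subset_inter_left W hsub1) hSαWfin
    have hlo : (Sα ∩ W).ncard ≤ (A2 ∩ W).ncard + E.ncard := by
      have hss : Sα ∩ W ⊆ (A2 ∩ W) ∪ E := by
        rintro x ⟨hx1, hx2⟩
        by_cases hxE : x ∈ E
        · exact Or.inr hxE
        · exact Or.inl ⟨hsub2 ⟨hx1, hxE⟩, hx2⟩
      refine le_trans (Set.ncard_le_ncard hss (hA2Wfin.union hEfin)) ?_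
      exact Set.ncard_union_le _ _
    rw [abs_sub_le_iff] at hcα ⊢
    have hup' : ((A2 ∩ W).ncard : ℝ) ≤ ((Sα ∩ W).ncard : ℝ) := by exact_mod_cast hup
    have hlo' : ((Sα ∩ W).ncard : ℝ) ≤ ((A2 ∩ W).ncard : ℝ) + (E.ncard : ℝ) := by
      exact_mod_cast hlo
    have hEnn : (0:ℝ) ≤ (E.ncard : ℝ) := by positivity
    have hd2 : 1/α * ((n₂:ℝ) - n₁) = ((n₂:ℝ) - n₁)/α := by ring
    constructor <;> rw [hd2] <;> linarith [hcα.1, hcα.2]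
  · -- densities of A_i for i ≥ 3
    intro i hi
    apply density_zero_of_subsingleton
    apply key3.anti
    intro x hx
    rw [ASet, if_neg (by omega)] at hx
    obtain ⟨⟨hx1, -⟩, hx2, -⟩ := hx
    have := hx2 1 le_rfl (by omega)
    rw [Function.iterate_one] at this
    exact ⟨hx1, this⟩
  · -- density of A_∞
    apply density_zero_of_subsingleton
    apply key3.anti
    rintro x ⟨⟨hx1, -⟩, hx2⟩
    have := hx2 1 le_rfl
    rw [Function.iterate_one] at this
    exact ⟨hx1, this⟩
end
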